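/- In the reduction, if R ⊆ F is a solution (posterior of E at least τ), then ⋂R contains exactly m − n Y-variables and no Z-variables. -/
import Mathlib

inductive World (n k : ℕ) : Type where
  | W : World n k
  | X : World n k
  | Y : Fin k → Fin n → World n k
  | Z : Fin n → World n k
  deriving DecidableEq, Fintype

/-- The event `F_i`: excludes `Y i l` and `Z l` for every `l ∈ A i`. -/
def Fev {n k : ℕ} (A : Fin k → Finset (Fin n)) (i : Fin k) : Set (World n k) :=
  {w | match w with
       | .Y j l => ¬ (j = i ∧ l ∈ A i)
       | .Z l => l ∉ A i
       | _ => True}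

open scoped Classical in
/-- Number of (valid) `Y`-variables belonging to a set of worlds. -/
noncomputable def Ycount {n k : ℕ} (A : Fin k → Finset (Fin n))
    (T : Set (World n k)) : ℕ :=
  (Finset.univ.filter
    (fun p : Fin k × Fin n => p.2 ∈ A p.1 ∧ World.Y p.1 p.2 ∈ T)).card

open scoped Classical in
/-- Number of `Z`-variables belonging to a set of worlds. -/
noncomputable def Zcount {n k : ℕ} (T : Set (World n k)) : ℕ :=
  (Finset.univ.filter (fun l : Fin n => World.Z l ∈ T)).card

/-- The probability function of the reduction (`x = 1/3`). -/
noncomputable def prob {n k : ℕ} (A : Fin k → Finset (Fin n)) (y z : ℝ) :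
    World n k → ℝ
  | .W => 1/3
  | .X => 1/3
  | .Y i l => if l ∈ A i then y else 0
  | .Z _ => z

/-- The additive extension of a probability function to sets of worlds. -/
noncomputable def pstar {n k : ℕ} (π : World n k → ℝ) (S : Set (World n k)) : ℝ :=
  ∑ w : World n k, Set.indicator S π w

/-- The goal event `E = {W₀} ∪ Y`. -/
def goal {n k : ℕ} : Set (World n k) :=
  {w | w = World.W ∨ ∃ (i : Fin k) (l : Fin n), w = World.Y i l}

def worldEquiv (n k : ℕ) : ((Fin k × Fin n) ⊕ Fin n ⊕ Unit ⊕ Unit) ≃ World n k where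
  toFun x := match x with
    | .inl p => .Y p.1 p.2
    | .inr (.inl l) => .Z l
    | .inr (.inr (.inl _)) => .W
    | .inr (.inr (.inr _)) => .X
  invFun w := match w with
    | .W => .inr (.inr (.inl ()))
    | .X => .inr (.inr (.inr ()))
    | .Y i l => .inl (i, l)
    | .Z l => .inr (.inl l)
  left_inv := by rintro (⟨i,l⟩|l|⟨⟩|⟨⟩) <;> rfl
  right_inv := by intro w; cases w <;> rfl

lemma sum_world {n k : ℕ} (f : World n k → ℝ) :
    ∑ w : World n k, f w =
      (∑ p : Fin k × Fin n, f (.Y p.1 p.2)) + (∑ l : Fin n, f (.Z l)) + f .W + f .X := by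
  rw [← Equiv.sum_comp (worldEquiv n k) f]
  simp [worldEquiv, Fintype.sum_sum_type]
  ring

open scoped Classical

lemma real_key (mr av bv cv yv : ℝ) (hm1 : 1 ≤ mr) (hy0 : 0 < yv)
    (hc0 : 0 ≤ cv) (hb0 : 0 ≤ bv)
    (hale : av ≤ cv + bv)
    (hsol : (1/3 + cv*yv) * (2/3 + av*yv + bv*(2*mr*yv)) ≤
      (1/3 + av*yv) * (2*(1/3) + cv*yv)) :
    bv = 0 ∧ av = cv := by
  have h1 : 0 ≤ (1/3)*(av-cv)*yv - (2*mr/3)*(bv*yv) - 2*mr*bv*cv*yv^2 := by nlinarith [hsol]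
  have hbv : bv = 0 := by
    nlinarith [mul_le_mul_of_nonneg_right hale hy0.le,
      mul_nonneg hb0 hy0.le,
      mul_nonneg (mul_nonneg hb0 hc0) (sq_nonneg yv),
      mul_nonneg (mul_nonneg hb0 hy0.le) (by linarith : (0:ℝ) ≤ mr - 1),
      mul_nonneg (mul_nonneg (mul_nonneg hb0 hc0) (mul_nonneg hy0.le hy0.le))
        (by linarith : (0:ℝ) ≤ mr - 1)]
  subst hbv
  constructor
  · rfl
  · have h2 : 0 ≤ (av - cv)*yv := by nlinarith [h1]
    have h3 : cv ≤ av := by nlinarith [h2]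
    linarith

theorem stmt_14 (n k : ℕ) (hn : 1 ≤ n) (A : Fin k → Finset (Fin n))
    (hcov : ∀ l : Fin n, ∃ i : Fin k, l ∈ A i)
    (m : ℕ) (hm : m = ∑ i : Fin k, (A i).card)
    (y z τ : ℝ)
    (hy : y = (1 - 2*(1/3 : ℝ)) / (m * (1 + 2*n)))
    (hz : z = 2*m*y)
    (hτ : τ = (1/3 + ((m - n : ℕ) : ℝ)*y) / (2*(1/3) + ((m - n : ℕ) : ℝ)*y))
    (R : Set (Fin k))
    (hsol : τ ≤ pstar (prob A y z) (goal ∩ ⋂ i ∈ R, Fev A i) /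
        pstar (prob A y z) (⋂ i ∈ R, Fev A i)) :
    Ycount A (⋂ i ∈ R, Fev A i) = m - n ∧
      ∀ l : Fin n, World.Z l ∉ ⋂ i ∈ R, Fev A i := by
  set T : Set (World n k) := ⋂ i ∈ R, Fev A i with hT
  -- membership facts
  have hW : World.W ∈ T := by simp [hT, Fev]
  have hX : World.X ∈ T := by simp [hT, Fev]
  have hWg : World.W ∈ goal ∩ T := ⟨Or.inl rfl, hW⟩
  have hXg : World.X ∉ (goal : Set (World n k)) := by simp [goal]
  have hZg : ∀ l, World.Z l ∉ (goal : Set (World n k)) := by simp [goal]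
  have hYg : ∀ i l, World.Y i l ∈ (goal : Set (World n k)) := fun i l => Or.inr ⟨i, l, rfl⟩
  have hYmem : ∀ i l, l ∈ A i → (World.Y i l ∈ T ↔ i ∉ R) := by
    intro i l hl
    simp only [hT, Set.mem_iInter, Fev, Set.mem_setOf_eq]
    constructor
    · intro h hi
      exact h i hi ⟨rfl, hl⟩
    · rintro hi j hj ⟨rfl, _⟩
      exact hi hj
  have hZmem : ∀ l, World.Z l ∈ T ↔ ∀ j ∈ R, l ∉ A j := by
    intro l
    simp only [hT, Set.mem_iInter, Fev, Set.mem_setOf_eq]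
  -- basic positivity
  have hnm : n ≤ m := by
    have : ∀ l : Fin n, 1 ≤ ∑ i : Fin k, if l ∈ A i then 1 else 0 := by
      intro l
      obtain ⟨i, hi⟩ := hcov l
      calc 1 = if l ∈ A i then 1 else 0 := by simp [hi]
        _ ≤ _ := Finset.single_le_sum (f := fun i => if l ∈ A i then 1 else 0)
            (fun _ _ => by positivity) (Finset.mem_univ i)
    calc n = ∑ _l : Fin n, 1 := by simp
      _ ≤ ∑ l : Fin n, ∑ i : Fin k, if l ∈ A i then 1 else 0 :=
          Finset.sum_le_sum (fun l _ => this l)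
      _ = ∑ i : Fin k, ∑ l : Fin n, if l ∈ A i then 1 else 0 := Finset.sum_comm
      _ = ∑ i : Fin k, (A i).card := by
          refine Finset.sum_congr rfl fun i _ => ?_
          rw [← Finset.card_filter]
          congr 1
          ext l; simp
      _ = m := hm.symm
  have hm1 : 1 ≤ m := le_trans hn hnm
  set a := Ycount A T with ha
  set b := Zcount T with hb
  -- a = sum over i ∉ R of |A i|
  have hacount : a = ∑ i : Fin k, if i ∈ R then 0 else (A i).card := by
    rw [ha, Ycount, Finset.card_filter, Fintype.sum_prod_type]
    refine Finset.sum_congr rfl fun i _ => ?_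
    by_cases hiR : i ∈ R
    · simp only [hiR, if_true]
      refine Finset.sum_eq_zero fun l _ => ?_
      by_cases hl : l ∈ A i
      · simp [hl, (hYmem i l hl).not.mpr (by simp [hiR])]
      · simp [hl]
    · simp only [hiR, if_false]
      rw [← Finset.card_filter]
      congr 1
      ext l
      by_cases hl : l ∈ A i
      · simp [hl, (hYmem i l hl).mpr hiR]
      · simp [hl]
  -- key combinatorial inequality : a + n ≤ m + b
  have hkey : a + n ≤ m + b := by
    have hsplit : m = (∑ i : Fin k, if i ∈ R then (A i).card else 0) + a := by
      rw [hacount, hm, ← Finset.sum_add_distrib]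
      refine Finset.sum_congr rfl fun i _ => ?_
      by_cases hiR : i ∈ R <;> simp [hiR]
    have hbn : ∀ l : Fin n,
        1 ≤ (∑ j : Fin k, if j ∈ R ∧ l ∈ A j then 1 else 0) +
            (if World.Z l ∈ T then 1 else 0) := by
      intro l
      by_cases hzt : World.Z l ∈ T
      · simp [hzt]
      · have : ∃ j, j ∈ R ∧ l ∈ A j := by
          by_contra hcon
          push_neg at hcon
          exact hzt ((hZmem l).mpr hcon)
        obtain ⟨j, hj⟩ := this
        calc 1 = if j ∈ R ∧ l ∈ A j then 1 else 0 := by simp [hj]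
          _ ≤ ∑ j : Fin k, if j ∈ R ∧ l ∈ A j then 1 else 0 :=
              Finset.single_le_sum (f := fun j => if j ∈ R ∧ l ∈ A j then 1 else 0)
                (fun _ _ => by positivity) (Finset.mem_univ j)
          _ ≤ _ := Nat.le_add_right _ _
    have hnle : n ≤ (∑ i : Fin k, if i ∈ R then (A i).card else 0) + b := by
      calc n = ∑ _l : Fin n, 1 := by simp
        _ ≤ ∑ l : Fin n, ((∑ j : Fin k, if j ∈ R ∧ l ∈ A j then 1 else 0) +
              (if World.Z l ∈ T then 1 else 0)) := Finset.sum_le_sum (fun l _ => hbn l)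
        _ = (∑ l : Fin n, ∑ j : Fin k, if j ∈ R ∧ l ∈ A j then 1 else 0) +
              ∑ l : Fin n, (if World.Z l ∈ T then 1 else 0) := Finset.sum_add_distrib
        _ = (∑ j : Fin k, ∑ l : Fin n, if j ∈ R ∧ l ∈ A j then 1 else 0) + b := by
              rw [Finset.sum_comm, hb, Zcount, Finset.card_filter]
        _ ≤ (∑ i : Fin k, if i ∈ R then (A i).card else 0) + b := by
              gcongr with j hji
              by_cases hjR : j ∈ R
              · simp only [hjR, if_true, true_and]
                rw [← Finset.card_filter]
                apply Finset.card_le_card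
                intro l hl; simpa using hl
              · simp [hjR]
    omega
  -- pstar computations
  have hpT : pstar (prob A y z) T = 2/3 + a * y + b * z := by
    rw [pstar, sum_world]
    rw [Set.indicator_of_mem hW, Set.indicator_of_mem hX]
    have h1 : ∀ p : Fin k × Fin n, Set.indicator T (prob A y z) (World.Y p.1 p.2) =
        if p.2 ∈ A p.1 ∧ World.Y p.1 p.2 ∈ T then y else 0 := by
      intro p
      rw [Set.indicator_apply]
      by_cases h1 : World.Y p.1 p.2 ∈ T <;> by_cases h2 : p.2 ∈ A p.1 <;>
        simp [h1, h2, prob]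
    have h2 : ∀ l : Fin n, Set.indicator T (prob A y z) (World.Z l) =
        if World.Z l ∈ T then z else 0 := by
      intro l
      rw [Set.indicator_apply]
      by_cases h1 : World.Z l ∈ T <;> simp [h1, prob]
    rw [Finset.sum_congr rfl (fun p _ => h1 p), Finset.sum_congr rfl (fun l _ => h2 l)]
    rw [Finset.sum_ite, Finset.sum_const, Finset.sum_const_zero,
        Finset.sum_ite, Finset.sum_const, Finset.sum_const_zero]
    simp only [prob, nsmul_eq_mul, add_zero]
    rw [ha, Ycount, hb, Zcount]
    ring
  have hpTg : pstar (prob A y z) (goal ∩ T) = 1/3 + a * y := by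
    rw [pstar, sum_world]
    rw [Set.indicator_of_mem hWg, Set.indicator_of_notMem (fun h => hXg h.1)]
    have h1 : ∀ p : Fin k × Fin n, Set.indicator (goal ∩ T) (prob A y z) (World.Y p.1 p.2) =
        if p.2 ∈ A p.1 ∧ World.Y p.1 p.2 ∈ T then y else 0 := by
      intro p
      rw [Set.indicator_apply]
      by_cases h1 : World.Y p.1 p.2 ∈ T <;> by_cases h2 : p.2 ∈ A p.1 <;>
        simp [h1, h2, prob, Set.mem_inter_iff, hYg]
    have h2 : ∀ l : Fin n, Set.indicator (goal ∩ T) (prob A y z) (World.Z l) = 0 :=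
      fun l => Set.indicator_of_notMem (fun h => hZg l h.1) _
    rw [Finset.sum_congr rfl (fun p _ => h1 p), Finset.sum_congr rfl (fun l _ => h2 l)]
    rw [Finset.sum_ite, Finset.sum_const, Finset.sum_const_zero]
    simp only [prob, nsmul_eq_mul, add_zero, Finset.sum_const_zero]
    rw [ha, Ycount]
    ring
  -- real arithmetic
  have hy0 : 0 < y := by
    rw [hy]
    apply div_pos (by norm_num)
    have h1 : (1:ℝ) ≤ m := by exact_mod_cast hm1
    positivity
  have hm1' : (1:ℝ) ≤ m := by exact_mod_cast hm1
  have hc : ((m - n : ℕ) : ℝ) = (m : ℝ) - n := by rw [Nat.cast_sub hnm]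
  have hc0 : (0:ℝ) ≤ ((m - n : ℕ) : ℝ) := Nat.cast_nonneg _
  have hb0 : (0:ℝ) ≤ b := Nat.cast_nonneg _
  have ha0 : (0:ℝ) ≤ a := Nat.cast_nonneg _
  have hale : (a : ℝ) ≤ ((m - n : ℕ) : ℝ) + b := by
    rw [hc]
    have h2 : (a:ℝ) + n ≤ m + b := by exact_mod_cast hkey
    linarith
  have hD0 : (0:ℝ) < 2*(1/3) + ((m - n : ℕ) : ℝ)*y := by positivity
  have hD : (0:ℝ) < 2/3 + a*y + b*z := by
    rw [hz]
    have h3 : (0:ℝ) ≤ (b:ℝ)*(2*m*y) := by positivity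
    positivity
  rw [hτ, hpT, hpTg, div_le_div_iff₀ hD0 hD, hz] at hsol
  obtain ⟨hbz, hac⟩ := real_key (m:ℝ) a b ((m - n : ℕ) : ℝ) y hm1' hy0 hc0 hb0 hale hsol
  have hbnat : b = 0 := by exact_mod_cast hbz
  have hanat : a = m - n := by exact_mod_cast hac
  refine ⟨hanat, fun l hl => ?_⟩
  have hmem : l ∈ Finset.univ.filter (fun l : Fin n => World.Z l ∈ T) := by
    simp [hl]
  rw [show Finset.univ.filter (fun l : Fin n => World.Z l ∈ T) = ∅ from
    Finset.card_eq_zero.mp hbnat] at hmem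
  exact absurd hmem (Finset.notMem_empty l)
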